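/- Let α > 0 and x > 1. Then ∑_{n=1}^∞ (1 + (n−1)x^{−α})(1 − x^{−α})^{n−1} = 2x^α − 1 < ∞. Consequently, for any sequence (X_n)_{n≥1} of real random variables on a probability space (Ω, ℙ) such that ℙ(|X_n| < x) = (1 + (n−1)x^{−α})(1 − x^{−α})^{n−1} for each n (i.e. |X_n| is distributed as the n-fold Kendall convolution power δ_1^{△_α n}), one has ℙ(limsup_n {|X_n| < x}) = 0; in particular the Kendall random walk with unit step δ̃_1 is not recurrent. -/

import Mathlib

/-!
Writing `r = x^(-α) ∈ (0, 1)`, the series splits into the geometric series `∑ (1-r)^n = 1/r` and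
`r ∑ n (1-r)^n = (1-r)/r`, whose sum is `2/r - 1 = 2x^α - 1`. The probabilities `ℙ(|X_n| < x)`
are therefore summable, and the first Borel–Cantelli lemma gives `ℙ(limsup {|X_n| < x}) = 0`.
-/

open MeasureTheory Set Filter

theorem hasSum_one_add_mul_mul_geometric {𝕜 : Type*} [NormedField 𝕜] {r : 𝕜}
    (hr : ‖1 - r‖ < 1) : HasSum (fun n : ℕ => (1 + n * r) * (1 - r) ^ n) (2 / r - 1) := by
  have hr0 : r ≠ 0 := by
    rintro rfl
    simp at hr
  have hgeom := hasSum_geometric_of_norm_lt_one hr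
  have hmul := (hasSum_coe_mul_geometric_of_norm_lt_one hr).mul_left r
  convert hgeom.add hmul using 1
  · ext n
    ring
  · rw [sub_sub_cancel]
    field_simp
    ring

theorem norm_one_sub_rpow_neg_lt_one {α x : ℝ} (hα : 0 < α) (hx : 1 < x) :
    ‖1 - x ^ (-α)‖ < 1 := by
  have hpos : 0 < x ^ (-α) := Real.rpow_pos_of_pos (by linarith) _
  have hlt : x ^ (-α) < 1 := Real.rpow_lt_one_of_one_lt_of_neg hx (by linarith)
  rw [Real.norm_eq_abs, abs_lt]
  constructor <;> linarith

theorem measure_iInter_iUnion_le_eq_zero_of_tsum_succ_ne_top {Ω : Type*} [MeasurableSpace Ω]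
    {μ : Measure Ω} {s : ℕ → Set Ω} (hs : ∑' n, μ (s (n + 1)) ≠ ⊤) :
    μ (⋂ n, ⋃ k, ⋃ _ : n ≤ k, s k) = 0 := by
  have hlimsup : limsup s atTop = ⋂ n, ⋃ k, ⋃ _ : n ≤ k, s k := by
    simp only [limsup_eq_iInf_iSup_of_nat, iInf_eq_iInter, iSup_eq_iUnion]
  rw [← hlimsup, ← limsup_nat_add s 1]
  exact measure_limsup_atTop_eq_zero hs

theorem kendall_walk_not_recurrent
    (α x : ℝ) (hα : 0 < α) (hx : 1 < x) :
    Summable (fun n : ℕ => (1 + (n : ℝ) * x ^ (-α)) * (1 - x ^ (-α)) ^ n)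
    ∧ ∑' n : ℕ, (1 + (n : ℝ) * x ^ (-α)) * (1 - x ^ (-α)) ^ n = 2 * x ^ α - 1
    ∧ ∀ (Ω : Type) (_ : MeasurableSpace Ω) (ℙ : Measure Ω), IsProbabilityMeasure ℙ →
        ∀ X : ℕ → Ω → ℝ,
          (∀ n : ℕ, 1 ≤ n →
            ℙ {ω | |X n ω| < x}
              = ENNReal.ofReal ((1 + ((n : ℝ) - 1) * x ^ (-α)) * (1 - x ^ (-α)) ^ (n - 1))) →
          ℙ (⋂ n : ℕ, ⋃ k : ℕ, ⋃ _ : n ≤ k, {ω | |X k ω| < x}) = 0 := by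
  have hsum_value : 2 / x ^ (-α) - 1 = 2 * x ^ α - 1 := by
    rw [Real.rpow_neg (by linarith), div_inv_eq_mul]
  have hsum := hsum_value ▸ hasSum_one_add_mul_mul_geometric (norm_one_sub_rpow_neg_lt_one hα hx)
  refine ⟨hsum.summable, hsum.tsum_eq, fun Ω _ ℙ _ X hX => ?_⟩
  apply measure_iInter_iUnion_le_eq_zero_of_tsum_succ_ne_top
  have hX_succ : ∀ n : ℕ, ℙ {ω | |X (n + 1) ω| < x}
      = ENNReal.ofReal ((1 + (n : ℝ) * x ^ (-α)) * (1 - x ^ (-α)) ^ n) := fun n => by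
    simpa using hX (n + 1) (Nat.le_add_left 1 n)
  rw [tsum_congr hX_succ]
  exact hsum.summable.tsum_ofReal_ne_top
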